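/- arXiv:2008.02721 — 2 statements merged into one kernel-verified Lean document; each statement's English description precedes it below -/
import Mathlib

section
/- Let 1 ≤ k ≤ n−1 and let W be any colored word on the set {n−k+1,…,n}. Then for every h ∈ {0,…,r−1} and every q ∈ ℂ, ∑_{π ∈ G_{r,n}(W)} χ_{1,h}(π) q^{fmaj(π)} = χ_{1,h}(W) · q^{fmaj(W)} · ∏_{j=k+1}^{n} [j·r]_{ζ^h q}. -/
open Finset

open scoped Classical

/-- `Flt x y` means `x <_F y` in the order on colored integers:
`(a,s) <_F (b,t)` iff `s > t`, or `s = t` and `a < b`. -/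
def Flt (x y : ℕ × ℕ) : Prop := y.2 < x.2 ∨ (x.2 = y.2 ∧ x.1 < y.1)

instance (x y : ℕ × ℕ) : Decidable (Flt x y) := by unfold Flt; infer_instance

/-- Inversion number of a list of naturals. -/
def invNum (l : List ℕ) : ℕ :=
  ∑ i ∈ Finset.range l.length, ∑ j ∈ Finset.range l.length,
    if i < j ∧ l.getD j 0 < l.getD i 0 then 1 else 0

/-- Sum of the colors of a colored word. -/
def colSum (l : List (ℕ × ℕ)) : ℕ := (l.map Prod.snd).sum

/-- The major index `maj_F` of a colored word: the sum of the
(1-indexed) positions `i` with `l_i >_F l_{i+1}`. -/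
def majF (l : List (ℕ × ℕ)) : ℕ :=
  ∑ i ∈ Finset.range (l.length - 1),
    if Flt (l.getD (i + 1) (0, 0)) (l.getD i (0, 0)) then i + 1 else 0

/-- The flag major index `fmaj = r·maj_F + col`. -/
def fmaj (r : ℕ) (l : List (ℕ × ℕ)) : ℕ := r * majF l + colSum l

/-- The list of absolute values of a colored word. -/
def absList (l : List (ℕ × ℕ)) : List ℕ := l.map Prod.fst

/-- The one-dimensional character value `χ_{ε,h}` of a colored word:
`ε^{inv(|W|)} · ζ^{h·col(W)}`. -/
noncomputable def chi (ε ζ : ℂ) (h : ℕ) (l : List (ℕ × ℕ)) : ℂ :=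
  ε ^ invNum (absList l) * ζ ^ (h * colSum l)

/-- `[m]_x = 1 + x + ⋯ + x^{m-1}`. -/
noncomputable def qnum (m : ℕ) (x : ℂ) : ℂ := ∑ i ∈ Finset.range m, x ^ i

/-- Colored permutations in `G_{r,n}`: a permutation of `Fin n` together with
a color in `Fin r` at each position. -/
abbrev GP (r n : ℕ) := Equiv.Perm (Fin n) × (Fin n → Fin r)

/-- The window notation of a colored permutation: the colored word whose `i`-th
entry is the value `π.1 i` (shifted to lie in `{1,…,n}`) with color `π.2 i`. -/
def window {r n : ℕ} (π : GP r n) : List (ℕ × ℕ) :=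
  (List.finRange n).map fun i => ((π.1 i : ℕ) + 1, (π.2 i : ℕ))

/-- `W` is a colored word on the finite set `A`: its absolute values are exactly
the elements of `A`, each used once, and all colors are in `{0,…,r-1}`. -/
def IsColoredWordOn (r : ℕ) (A : Finset ℕ) (W : List (ℕ × ℕ)) : Prop :=
  (W.map Prod.fst).Nodup ∧ (W.map Prod.fst).toFinset = A ∧ ∀ p ∈ W, p.2 < r

/-! Erasing from a colored permutation its letters of absolute value `1, …, n - k`, smallest
first, leaves the subword `W`. Conversely, a letter `(a, c)` inserted at each of the `L + 1`
positions of a word `V` of length `L` not containing it yields the major indices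
`maj_F V, maj_F V + 1, …, maj_F V + L`, whatever its color (only that `<_F` is a strict total
order matters). Summing over positions and the `r` colors thus multiplies `ζ^{h·col} q^{fmaj}` by
`[L + 1]_{q^r} [r]_{ζ^h q} = [(L + 1) r]_{ζ^h q}`, as `(ζ^h q)^r = q^r`. -/

theorem flt_trans {x y z : ℕ × ℕ} (hxy : Flt x y) (hyz : Flt y z) : Flt x z := by
  unfold Flt at *; omega

theorem flt_asymm {x y : ℕ × ℕ} (hxy : Flt x y) : ¬ Flt y x := by
  unfold Flt at *; omega

theorem flt_or_flt_of_ne {x y : ℕ × ℕ} (h : x ≠ y) : Flt x y ∨ Flt y x := by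
  unfold Flt; rcases x with ⟨a, s⟩; rcases y with ⟨b, t⟩
  simp only [ne_eq, Prod.mk.injEq] at h ⊢; omega

namespace List

variable {α : Type*}

theorem insertIdx_append_of_le_length {l : List α} {i : ℕ} (hi : i ≤ l.length) (l' : List α)
    (x : α) : (l ++ l').insertIdx i x = l.insertIdx i x ++ l' := by
  induction l generalizing i with
  | nil => simp_all
  | cons a l ih =>
    cases i with
    | zero => simp
    | succ i => simp [insertIdx_succ_cons, ih (Nat.le_of_succ_le_succ hi)]

theorem insertIdx_length_append (l₁ l₂ : List α) (x : α) :
    (l₁ ++ l₂).insertIdx l₁.length x = l₁ ++ x :: l₂ := by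
  induction l₁ with
  | nil => simp
  | cons a l ih => simp [insertIdx_succ_cons, ih]

theorem filter_insertIdx_of_not {p : α → Bool} {x : α} (hx : p x = false) (l : List α)
    (i : ℕ) : (l.insertIdx i x).filter p = l.filter p := by
  induction l generalizing i with
  | nil => cases i <;> simp [hx]
  | cons a l ih =>
    cases i with
    | zero => simp [hx]
    | succ i => simp only [insertIdx_succ_cons, filter_cons, ih]

theorem getLastD_insertIdx_of_lt {l : List α} {i : ℕ} (hi : i < l.length) (x d : α) :
    (l.insertIdx i x).getLastD d = l.getLastD d := by
  rw [getLastD_eq_getLast?, getLastD_eq_getLast?, getLast?_eq_getElem?, getLast?_eq_getElem?,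
    length_insertIdx_of_le_length hi.le, Nat.add_sub_cancel, getElem?_insertIdx_of_gt hi]

theorem exists_eq_insertIdx_filter {p : α → Bool} {l : List α} (hl : l.Nodup)
    {x : α} (hx : x ∈ l) (hpx : p x = false) (hp : ∀ y ∈ l, y ≠ x → p y) :
    ∃ i ≤ (l.filter p).length, l = (l.filter p).insertIdx i x := by
  obtain ⟨l₁, l₂, rfl⟩ := append_of_mem hx
  have hfilter : (l₁ ++ x :: l₂).filter p = l₁ ++ l₂ := by
    have hx₁ : x ∉ l₁ := fun h => (nodup_append.mp hl).2.2 x h x mem_cons_self rfl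
    have hx₂ : x ∉ l₂ := (nodup_cons.mp (nodup_append.mp hl).2.1).1
    rw [filter_append, filter_cons, hpx, if_neg Bool.false_ne_true,
      filter_eq_self.mpr fun y hy => hp y (by simp [hy]) (by rintro rfl; exact hx₁ hy),
      filter_eq_self.mpr fun y hy => hp y (by simp [hy]) (by rintro rfl; exact hx₂ hy)]
  exact ⟨l₁.length, by simp [hfilter], by rw [hfilter, insertIdx_length_append]⟩

theorem insertIdx_inj_of_notMem {l : List α} {x y : α} (hx : x ∉ l) {i j : ℕ}
    (hi : i ≤ l.length) (hj : j ≤ l.length) (h : l.insertIdx i x = l.insertIdx j y) :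
    i = j ∧ x = y := by
  have hxy : x = y := by
    have hmem : x ∈ l.insertIdx j y := h ▸ mem_insertIdx hi |>.mpr (Or.inl rfl)
    exact (eq_or_mem_of_mem_insertIdx hmem).resolve_right hx
  subst hxy
  exact ⟨injOn_insertIdx_index_of_notMem l x hx hi hj h, rfl⟩

theorem sublist_iff_filter_eq {β : Type*} {p : α → Bool} {W U : List (α × β)}
    (hU : (U.map Prod.fst).Nodup)
    (hW : ∀ a, a ∈ W.map Prod.fst ↔ a ∈ U.map Prod.fst ∧ p a) :
    W.Sublist U ↔ U.filter (fun x => p x.1) = W := by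
  constructor
  · intro hWU
    have hWp : ∀ w ∈ W, p w.1 := fun w hw => ((hW w.1).mp (mem_map_of_mem hw)).2
    have hsub : W.Sublist (U.filter (fun x => p x.1)) := by
      simpa [filter_eq_self.mpr hWp] using hWU.filter (fun x => p x.1)
    refine (hsub.eq_of_length_le ?_).symm
    refine (subperm_of_subset ((hU.of_map _).filter _) fun y hy => ?_).length_le
    obtain ⟨hyU, hy⟩ := mem_filter.mp hy
    obtain ⟨w, hwW, hw⟩ := mem_map.mp ((hW y.1).mpr ⟨mem_map_of_mem hyU, hy⟩)
    rwa [← inj_on_of_nodup_map hU (hWU.subset hwW) hyU hw]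
  · rintro rfl
    exact filter_sublist

end List

theorem majF_append_singleton (l : List (ℕ × ℕ)) (u : ℕ × ℕ) :
    majF (l ++ [u]) = majF l + if Flt u (l.getLastD (0, 0)) then l.length else 0 := by
  rcases l.eq_nil_or_concat with rfl | ⟨l, w, rfl⟩
  · simp [majF]
  rw [List.concat_eq_append, majF, majF, List.getLastD_concat]
  simp only [List.length_append, List.length_singleton, Nat.add_sub_cancel, sum_range_succ]
  congr 1
  · refine sum_congr rfl fun i hi => ?_
    have hi : i < l.length := mem_range.mp hi
    rw [List.getD_append (l ++ [w]) [u] _ _ (by simp; omega),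
      List.getD_append (l ++ [w]) [u] _ _ (by simp; omega)]
  · rw [List.getD_append_right _ _ _ _ (by simp), List.getD_append _ _ _ _ (by simp)]
    simp

theorem majF_append_pair (l : List (ℕ × ℕ)) (y z : ℕ × ℕ) :
    majF (l ++ [y, z]) = majF l + (if Flt y (l.getLastD (0, 0)) then l.length else 0)
      + if Flt z y then l.length + 1 else 0 := by
  rw [show l ++ [y, z] = l ++ [y] ++ [z] by simp, majF_append_singleton, majF_append_singleton,
    List.getLastD_concat, List.length_append, List.length_singleton]

theorem majF_insertIdx_append_singleton {U : List (ℕ × ℕ)} {i : ℕ} (hi : i < U.length)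
    (x u : ℕ × ℕ) : majF ((U ++ [u]).insertIdx i x)
      = majF (U.insertIdx i x) + if Flt u (U.getLastD (0, 0)) then U.length + 1 else 0 := by
  rw [List.insertIdx_append_of_le_length hi.le, majF_append_singleton,
    List.getLastD_insertIdx_of_lt hi, List.length_insertIdx_of_le_length hi.le]

theorem sum_pow_majF_insertIdx {R : Type*} [CommRing R] (t : R) {x : ℕ × ℕ}
    {V : List (ℕ × ℕ)} (hx : x ∉ V) :
    ∑ i ∈ range (V.length + 1), t ^ majF (V.insertIdx i x)
      = t ^ majF V * ∑ d ∈ range (V.length + 1), t ^ d := by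
  induction V using List.reverseRecOn with
  | nil => simp [majF]
  | append_singleton U u ih =>
    have hxU : x ∉ U := fun h => hx (List.mem_append_left _ h)
    have hxu : x ≠ u := fun h => hx (by simp [h])
    obtain ⟨n, hn⟩ : ∃ n, U.length = n := ⟨_, rfl⟩
    obtain ⟨w, hw⟩ : ∃ w, U.getLastD (0, 0) = w := ⟨_, rfl⟩
    obtain ⟨M, hM⟩ : ∃ M, majF U = M := ⟨_, rfl⟩
    have hfront : ∀ i ∈ range n, t ^ majF ((U ++ [u]).insertIdx i x)
        = t ^ majF (U.insertIdx i x) * t ^ (if Flt u w then n + 1 else 0) := by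
      intro i hi
      rw [majF_insertIdx_append_singleton (hn ▸ mem_range.mp hi), pow_add, hw, hn]
    have hmid : majF ((U ++ [u]).insertIdx n x)
        = M + (if Flt x w then n else 0) + (if Flt u x then n + 1 else 0) := by
      rw [← hn, List.insertIdx_append_of_le_length le_rfl, List.insertIdx_length_self,
        List.append_assoc, List.singleton_append, majF_append_pair, hw, hM]
    have hlast : majF ((U ++ [u]).insertIdx (n + 1) x)
        = M + (if Flt u w then n else 0) + (if Flt x u then n + 1 else 0) := by
      have happend : (U ++ [u]).insertIdx (n + 1) x = U ++ [u, x] := by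
        simpa [hn] using List.insertIdx_length_self (l := U ++ [u]) (x := x)
      rw [happend, majF_append_pair, hw, hM, hn]
    have hIH : ∑ i ∈ range n, t ^ majF (U.insertIdx i x)
        = t ^ M * ∑ d ∈ range (n + 1), t ^ d - t ^ (M + if Flt x w then n else 0) := by
      rw [← hM, ← hn, ← ih hxU, sum_range_succ, List.insertIdx_length_self,
        majF_append_singleton, hw]
      ring
    have hG : ∑ d ∈ range (n + 1 + 1), t ^ d = 1 + t * ∑ d ∈ range (n + 1), t ^ d := by
      rw [sum_range_succ', mul_sum]; simp only [pow_succ', pow_zero]; ring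
    have hG' := sum_range_succ (fun d => t ^ d) (n + 1)
    rw [List.length_append, List.length_singleton, hn, sum_range_succ, sum_range_succ,
      sum_congr rfl hfront, ← sum_mul, hIH, hmid, hlast, majF_append_singleton, hw, hM, hn]
    -- `[n + 2]_t` is `1 + t [n + 1]_t` when the last two letters of `U ++ [u]` form a descent,
    -- and `[n + 1]_t + t ^ (n + 1)` otherwise; transitivity of `<_F` rules out the other cases.
    rcases flt_or_flt_of_ne hxu with hxu | hux
    · simp only [hxu, flt_asymm hxu, if_true, if_false]
      by_cases huw : Flt u w
      · simp only [huw, flt_trans hxu huw, if_true]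
        linear_combination (-t ^ (M + n)) * hG
      · simp only [huw, if_false]
        linear_combination (-t ^ M) * hG'
    · simp only [hux, flt_asymm hux, if_true, if_false]
      by_cases huw : Flt u w
      · simp only [huw, if_true]
        linear_combination (-t ^ (M + n)) * hG
      · have hxw : ¬ Flt x w := fun hxw => huw (flt_trans hux hxw)
        simp only [huw, hxw, if_false]
        linear_combination (-t ^ M) * hG'

theorem colSum_insertIdx {l : List (ℕ × ℕ)} {i : ℕ} (hi : i ≤ l.length) (x : ℕ × ℕ) :
    colSum (l.insertIdx i x) = colSum l + x.2 := by
  rw [colSum, ((List.perm_insertIdx x l hi).map Prod.snd).sum_eq, colSum, List.map_cons,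
    List.sum_cons, add_comm]

theorem qnum_mul (N r : ℕ) (x : ℂ) : qnum (N * r) x = qnum N (x ^ r) * qnum r x := by
  induction N with
  | zero => simp [qnum]
  | succ N ih =>
    rw [Nat.succ_mul, qnum, sum_range_add, ← qnum, ih]
    simp only [qnum, sum_range_succ, add_mul, pow_add, ← mul_sum, ← pow_mul, mul_comm r N]

noncomputable def fmajWeight (r h : ℕ) (ζ q : ℂ) (l : List (ℕ × ℕ)) : ℂ :=
  chi 1 ζ h l * q ^ fmaj r l

theorem fmajWeight_eq (r h : ℕ) (ζ q : ℂ) (l : List (ℕ × ℕ)) :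
    fmajWeight r h ζ q l = (ζ ^ h * q) ^ colSum l * (q ^ r) ^ majF l := by
  rw [fmajWeight, chi, fmaj, one_pow, one_mul, mul_pow, pow_add, pow_mul, pow_mul]
  ring

theorem sum_fmajWeight_insertIdx {r : ℕ} {ζ : ℂ} (hζ : ζ ^ r = 1) (h : ℕ) (q : ℂ) {a : ℕ}
    {V : List (ℕ × ℕ)} (ha : a ∉ V.map Prod.fst) :
    ∑ c ∈ range r, ∑ i ∈ range (V.length + 1), fmajWeight r h ζ q (V.insertIdx i (a, c))
      = fmajWeight r h ζ q V * qnum ((V.length + 1) * r) (ζ ^ h * q) := by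
  have hx : ∀ c, (a, c) ∉ V := fun c hc => ha (List.mem_map_of_mem (f := Prod.fst) hc)
  have hxr : (ζ ^ h * q) ^ r = q ^ r := by
    rw [mul_pow, ← pow_mul, mul_comm h r, pow_mul, hζ, one_pow, one_mul]
  calc ∑ c ∈ range r, ∑ i ∈ range (V.length + 1), fmajWeight r h ζ q (V.insertIdx i (a, c))
      = ∑ c ∈ range r, (ζ ^ h * q) ^ (colSum V + c) *
          ∑ i ∈ range (V.length + 1), (q ^ r) ^ majF (V.insertIdx i (a, c)) := by
        refine sum_congr rfl fun c _ => ?_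
        rw [mul_sum]
        refine sum_congr rfl fun i hi => ?_
        rw [fmajWeight_eq, colSum_insertIdx (Nat.lt_succ_iff.mp (mem_range.mp hi))]
    _ = ∑ c ∈ range r, (ζ ^ h * q) ^ (colSum V + c) *
          ((q ^ r) ^ majF V * qnum (V.length + 1) ((ζ ^ h * q) ^ r)) := by
        simp only [sum_pow_majF_insertIdx _ (hx _), hxr, qnum]
    _ = fmajWeight r h ζ q V * qnum ((V.length + 1) * r) (ζ ^ h * q) := by
        rw [qnum_mul, fmajWeight_eq, ← sum_mul]
        simp only [pow_add, ← mul_sum]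
        rw [← qnum]
        ring

theorem IsColoredWordOn.length_eq {r : ℕ} {A : Finset ℕ} {W : List (ℕ × ℕ)}
    (hW : IsColoredWordOn r A W) : W.length = A.card := by
  rw [← hW.2.1, List.toFinset_card_of_nodup hW.1, List.length_map]

theorem IsColoredWordOn.mem_fst {r : ℕ} {A : Finset ℕ} {W : List (ℕ × ℕ)}
    (hW : IsColoredWordOn r A W) {a : ℕ} : a ∈ W.map Prod.fst ↔ a ∈ A := by
  rw [← hW.2.1, List.mem_toFinset]

theorem IsColoredWordOn.insertIdx {r : ℕ} {A : Finset ℕ} {V : List (ℕ × ℕ)}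
    (hV : IsColoredWordOn r A V) {a c : ℕ} (ha : a ∉ A) (hc : c < r) {i : ℕ}
    (hi : i ≤ V.length) : IsColoredWordOn r (insert a A) (V.insertIdx i (a, c)) := by
  have hperm := List.perm_insertIdx (a, c) V hi
  refine ⟨(hperm.map Prod.fst).nodup_iff.mpr ?_, ?_, fun p hp => ?_⟩
  · exact List.nodup_cons.mpr ⟨fun h => ha (hV.mem_fst.mp h), hV.1⟩
  · rw [List.toFinset_eq_of_perm _ _ (hperm.map Prod.fst), List.map_cons, List.toFinset_cons,
      hV.2.1]
  · rcases List.mem_cons.mp (hperm.mem_iff.mp hp) with rfl | hp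
    exacts [hc, hV.2.2 p hp]

theorem window_injective (r n : ℕ) : Function.Injective (window (r := r) (n := n)) := by
  intro π π' h
  have hpt := List.map_inj_left.mp h
  ext i
  · exact congrArg (·.1 - 1) (hpt i (List.mem_finRange i))
  · exact congrArg Prod.snd (hpt i (List.mem_finRange i))

theorem isColoredWordOn_window {r n : ℕ} (π : GP r n) :
    IsColoredWordOn r (Icc 1 n) (window π) := by
  have hfst : (window π).map Prod.fst = (List.finRange n).map (fun i => (π.1 i : ℕ) + 1) := by
    simp [window, Function.comp_def]
  refine ⟨?_, ?_, ?_⟩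
  · rw [hfst]
    exact (List.nodup_finRange n).map fun i j hij =>
      π.1.injective (Fin.ext (Nat.add_right_cancel hij))
  · ext a
    simp only [hfst, List.mem_toFinset, List.mem_map, List.mem_finRange, true_and, mem_Icc]
    constructor
    · rintro ⟨i, rfl⟩
      exact ⟨Nat.le_add_left 1 _, (π.1 i).isLt⟩
    · rintro ⟨ha₁, ha₂⟩
      exact ⟨π.1.symm ⟨a - 1, by omega⟩, by simp; omega⟩
  · simp [window]

theorem exists_window_eq {r n : ℕ} {U : List (ℕ × ℕ)} (hU : IsColoredWordOn r (Icc 1 n) U) :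
    ∃ π : GP r n, window π = U := by
  obtain rfl : U.length = n := by simpa using hU.length_eq
  have hbound : ∀ i : Fin U.length, 1 ≤ U[i.1].1 ∧ U[i.1].1 ≤ U.length := fun i =>
    mem_Icc.mp (hU.mem_fst.mp (List.mem_map_of_mem (List.getElem_mem i.isLt)))
  let σ : Fin U.length → Fin U.length := fun i => ⟨U[i.1].1 - 1, by have := hbound i; omega⟩
  have hσ : σ.Injective := fun i j hij => by
    have h₁ : (U.map Prod.fst)[i.1]'(by simp) = (U.map Prod.fst)[j.1]'(by simp) := by
      have := hbound i; have := hbound j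
      simp only [σ, Fin.mk.injEq] at hij
      simp only [List.getElem_map]
      omega
    exact Fin.ext ((List.Nodup.getElem_inj_iff hU.1).mp h₁)
  refine ⟨(Equiv.ofBijective σ hσ.bijective_of_finite,
    fun i => ⟨U[i.1].2, hU.2.2 _ (List.getElem_mem i.isLt)⟩), ?_⟩
  conv_rhs => rw [← List.map_getElem_finRange U]
  refine List.map_congr_left fun i _ => ?_
  have := hbound i
  simp only [Equiv.ofBijective_apply, σ]
  ext <;> simp
  omega

theorem mem_image_window_iff {r n : ℕ} {U : List (ℕ × ℕ)} :
    U ∈ (univ : Finset (GP r n)).image window ↔ IsColoredWordOn r (Icc 1 n) U := by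
  constructor
  · intro hU
    obtain ⟨π, -, rfl⟩ := mem_image.mp hU
    exact isColoredWordOn_window π
  · intro hU
    obtain ⟨π, rfl⟩ := exists_window_eq hU
    exact mem_image_of_mem _ (mem_univ π)

def subwordAbove (m : ℕ) (U : List (ℕ × ℕ)) : List (ℕ × ℕ) := U.filter (fun p => m < p.1)

theorem subwordAbove_succ (m : ℕ) (U : List (ℕ × ℕ)) :
    subwordAbove (m + 1) U = (subwordAbove m U).filter (fun p => m + 1 < p.1) := by
  rw [subwordAbove, subwordAbove, List.filter_filter]
  exact List.filter_congr fun p _ => by simp only [← Bool.decide_and, decide_eq_decide]; omega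

theorem exists_subwordAbove_eq_insertIdx {m c : ℕ} {U : List (ℕ × ℕ)}
    (hU : (U.map Prod.fst).Nodup) (hc : (m + 1, c) ∈ U) :
    ∃ i ≤ (subwordAbove (m + 1) U).length,
      subwordAbove m U = (subwordAbove (m + 1) U).insertIdx i (m + 1, c) := by
  rw [subwordAbove_succ]
  refine List.exists_eq_insertIdx_filter ((hU.of_map _).filter _)
    (List.mem_filter.mpr ⟨hc, by simp⟩) (by simp) fun y hy hyx => ?_
  obtain ⟨hyU, hy⟩ := List.mem_filter.mp hy
  have hy1 : y.1 ≠ m + 1 := fun h => hyx (List.inj_on_of_nodup_map hU hyU hc h)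
  simp only [decide_eq_true_eq] at hy ⊢
  omega

theorem subwordAbove_succ_of_eq_insertIdx {m c i : ℕ} {U V : List (ℕ × ℕ)}
    (hV : ∀ v ∈ V, m + 1 < v.1) (h : subwordAbove m U = V.insertIdx i (m + 1, c)) :
    subwordAbove (m + 1) U = V := by
  rw [subwordAbove_succ, h, List.filter_insertIdx_of_not (by simp),
    List.filter_eq_self.mpr fun v hv => by simpa using hV v hv]

theorem sum_filter_subwordAbove_succ {r n m : ℕ} (hm : m + 1 ≤ n) {S : Finset (List (ℕ × ℕ))}
    (hS : ∀ U ∈ S, IsColoredWordOn r (Icc 1 n) U) {V : List (ℕ × ℕ)}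
    (hV : ∀ v ∈ V, m + 1 < v.1) (f : List (ℕ × ℕ) → ℂ) :
    ∑ U ∈ S.filter (subwordAbove (m + 1) · = V), f U
      = ∑ c ∈ range r, ∑ i ∈ range (V.length + 1),
          ∑ U ∈ S.filter (subwordAbove m · = V.insertIdx i (m + 1, c)), f U := by
  set F : ℕ × ℕ → Finset (List (ℕ × ℕ)) := fun p =>
    S.filter (subwordAbove m · = V.insertIdx p.2 (m + 1, p.1))
  have hnotMem : ∀ c, (m + 1, c) ∉ V := fun c hc => (hV _ hc).false
  have hdisj : (↑(range r ×ˢ range (V.length + 1)) : Set (ℕ × ℕ)).PairwiseDisjoint F := by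
    intro p hp p' hp' hne
    refine disjoint_left.mpr fun U hU hU' => hne ?_
    simp only [coe_product, coe_range, Set.mem_prod, Set.mem_Iio] at hp hp'
    obtain ⟨hi, hc⟩ := List.insertIdx_inj_of_notMem (hnotMem p.1) (by omega) (by omega)
      ((mem_filter.mp hU).2.symm.trans (mem_filter.mp hU').2)
    exact Prod.ext (Prod.mk.inj hc).2 hi
  rw [← sum_product' (f := fun c i => ∑ U ∈ F (c, i), f U), ← sum_biUnion hdisj]
  refine sum_congr (ext fun U => ?_) fun _ _ => rfl
  simp only [mem_filter, mem_biUnion, mem_product, mem_range, F]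
  constructor
  · rintro ⟨hUS, rfl⟩
    have hU := hS U hUS
    obtain ⟨x, hxU, hx⟩ := List.mem_map.mp (hU.mem_fst.mpr (mem_Icc.mpr ⟨by omega, hm⟩))
    obtain ⟨i, hi, hsub⟩ := exists_subwordAbove_eq_insertIdx (c := x.2) hU.1 (by rwa [← hx])
    exact ⟨(x.2, i), ⟨hU.2.2 x hxU, by omega⟩, hUS, hsub⟩
  · rintro ⟨p, -, hUS, hsub⟩
    exact ⟨hUS, subwordAbove_succ_of_eq_insertIdx hV hsub⟩

theorem subwordAbove_zero_of_isColoredWordOn {r n : ℕ} {U : List (ℕ × ℕ)}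
    (hU : IsColoredWordOn r (Icc 1 n) U) : subwordAbove 0 U = U :=
  List.filter_eq_self.mpr fun _ hp =>
    decide_eq_true (mem_Icc.mp (hU.mem_fst.mp (List.mem_map_of_mem hp))).1

theorem sum_fmajWeight_filter_subwordAbove {r h : ℕ} {ζ : ℂ} (hζ : ζ ^ r = 1) (q : ℂ) {n m : ℕ}
    (hm : m ≤ n) {V : List (ℕ × ℕ)} (hV : IsColoredWordOn r (Icc (m + 1) n) V) :
    ∑ U ∈ ((univ : Finset (GP r n)).image window).filter (subwordAbove m · = V),
        fmajWeight r h ζ q U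
      = fmajWeight r h ζ q V * ∏ j ∈ Icc (V.length + 1) n, qnum (j * r) (ζ ^ h * q) := by
  set S := (univ : Finset (GP r n)).image window
  have hlen : V.length = n - m := by simpa using hV.length_eq
  induction m generalizing V with
  | zero =>
    have hfilter : S.filter (subwordAbove 0 · = V) = {V} := by
      ext U
      simp only [S, mem_filter, mem_singleton, mem_image_window_iff]
      constructor
      · rintro ⟨hU, rfl⟩
        exact (subwordAbove_zero_of_isColoredWordOn hU).symm
      · rintro rfl
        exact ⟨hV, subwordAbove_zero_of_isColoredWordOn hV⟩
    rw [hfilter, sum_singleton, hlen, Nat.sub_zero, Icc_eq_empty (by omega), prod_empty, mul_one]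
  | succ m ih =>
    have hfst : ∀ v ∈ V, m + 1 < v.1 := fun v hv =>
      (mem_Icc.mp (hV.mem_fst.mp (List.mem_map_of_mem hv))).1
    have hm1 : m + 1 ∉ V.map Prod.fst := fun h => by
      simpa using (mem_Icc.mp (hV.mem_fst.mp h)).1
    have hins : ∀ c ∈ range r, ∀ i ∈ range (V.length + 1),
        IsColoredWordOn r (Icc (m + 1) n) (V.insertIdx i (m + 1, c)) := fun c hc i hi => by
      rw [← insert_Icc_add_one_left_eq_Icc (by omega)]
      exact hV.insertIdx (by simp) (mem_range.mp hc) (Nat.lt_succ_iff.mp (mem_range.mp hi))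
    have hprod : ∏ j ∈ Icc (V.length + 1) n, qnum (j * r) (ζ ^ h * q)
        = qnum ((V.length + 1) * r) (ζ ^ h * q)
          * ∏ j ∈ Icc (V.length + 1 + 1) n, qnum (j * r) (ζ ^ h * q) := by
      rw [← insert_Icc_add_one_left_eq_Icc (a := V.length + 1) (by omega), prod_insert (by simp)]
    calc ∑ U ∈ S.filter (subwordAbove (m + 1) · = V), fmajWeight r h ζ q U
        = ∑ c ∈ range r, ∑ i ∈ range (V.length + 1), fmajWeight r h ζ q (V.insertIdx i (m + 1, c))
            * ∏ j ∈ Icc (V.length + 1 + 1) n, qnum (j * r) (ζ ^ h * q) := by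
          rw [sum_filter_subwordAbove_succ hm (fun U hU => mem_image_window_iff.mp hU) hfst]
          refine sum_congr rfl fun c hc => sum_congr rfl fun i hi => ?_
          rw [ih (by omega) (hins c hc i hi) (by simpa using (hins c hc i hi).length_eq),
            List.length_insertIdx_of_le_length (Nat.lt_succ_iff.mp (mem_range.mp hi))]
      _ = fmajWeight r h ζ q V * ∏ j ∈ Icc (V.length + 1) n, qnum (j * r) (ζ ^ h * q) := by
          simp only [← sum_mul, sum_fmajWeight_insertIdx hζ h q hm1, hprod, mul_assoc]

theorem insertion_chi_one_iterated_general (r n k h : ℕ) (ζ q : ℂ)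
    (hζ : IsPrimitiveRoot ζ r)
    (W : List (ℕ × ℕ)) (hW : IsColoredWordOn r (Finset.Icc (n - k + 1) n) W) :
    ∑ π ∈ Finset.univ.filter (fun π : GP r n => W.Sublist (window π)),
      chi 1 ζ h (window π) * q ^ fmaj r (window π)
    = chi 1 ζ h W * q ^ fmaj r W *
        ∏ j ∈ Finset.Icc (k + 1) n, qnum (j * r) (ζ ^ h * q) := by
  set S := (univ : Finset (GP r n)).image window
  have hsublist : ∀ U ∈ S, W.Sublist U ↔ subwordAbove (n - k) U = W := fun U hU =>
    List.sublist_iff_filter_eq (p := (n - k < ·)) (mem_image_window_iff.mp hU).1 fun a => by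
      rw [hW.mem_fst, (mem_image_window_iff.mp hU).mem_fst, mem_Icc, mem_Icc, decide_eq_true_iff]
      omega
  have hIcc : Icc (W.length + 1) n = Icc (k + 1) n := by
    ext j
    simp only [hW.length_eq, Nat.card_Icc, mem_Icc]
    omega
  calc ∑ π ∈ univ.filter (fun π : GP r n => W.Sublist (window π)), fmajWeight r h ζ q (window π)
      = ∑ U ∈ S.filter (W.Sublist ·), fmajWeight r h ζ q U := by
        rw [filter_image, sum_image (window_injective r n).injOn]
    _ = ∑ U ∈ S.filter (subwordAbove (n - k) · = W), fmajWeight r h ζ q U :=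
        sum_congr (filter_congr hsublist) fun _ _ => rfl
    _ = fmajWeight r h ζ q W * ∏ j ∈ Icc (k + 1) n, qnum (j * r) (ζ ^ h * q) := by
        rw [sum_fmajWeight_filter_subwordAbove hζ.pow_eq_one q (Nat.sub_le n k) hW, hIcc]

/-- iterated insertion lemma for `χ_{1,h}`:
`W` is a colored word on `{n-k+1,…,n}`. -/
theorem insertion_chi_one_iterated (r n k h : ℕ) (ζ q : ℂ)
    (hr : 1 ≤ r) (hn : 1 ≤ n) (hζ : IsPrimitiveRoot ζ r)
    (hk1 : 1 ≤ k) (hk2 : k ≤ n - 1) (hh : h < r)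
    (W : List (ℕ × ℕ)) (hW : IsColoredWordOn r (Finset.Icc (n - k + 1) n) W) :
    ∑ π ∈ Finset.univ.filter (fun π : GP r n => W.Sublist (window π)),
      chi 1 ζ h (window π) * q ^ fmaj r (window π)
    = chi 1 ζ h W * q ^ fmaj r W *
        ∏ j ∈ Finset.Icc (k + 1) n, qnum (j * r) (ζ ^ h * q) :=
  insertion_chi_one_iterated_general r n k h ζ q hζ W hW
end

section
/- For every permutation w of {1,…,n}, every ε ∈ {1,−1}, and every q ∈ ℂ, ∑_{π ∈ G*_{r,n}, |π| = w} ε^{inv(|π|)} q^{Dmaj(π)} = ε^{inv(w)} · q^{maj(w)} · ∏_{j=1}^{n−1} [r]_{q^j}. -/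
open Finset

open scoped Classical

/-- The major index of a list of naturals: the sum of the (1-indexed) positions
`i` with `l_i > l_{i+1}`. -/
def majL (l : List ℕ) : ℕ :=
  ∑ i ∈ Finset.range (l.length - 1),
    if l.getD (i + 1) 0 < l.getD i 0 then i + 1 else 0

/-- The one-line notation of a permutation of `Fin n`, as a list of values in
`{1,…,n}`. -/
def permList {n : ℕ} (w : Equiv.Perm (Fin n)) : List ℕ :=
  (List.finRange n).map fun i => (w i : ℕ) + 1

/-- The window of `π` with the color of its last entry replaced by `0`;
`Dmaj(π) = fmaj` of this word. -/
def windowD {r n : ℕ} (π : GP r n) : List (ℕ × ℕ) :=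
  (List.finRange n).map fun i =>
    ((π.1 i : ℕ) + 1, if (i : ℕ) = n - 1 then 0 else (π.2 i : ℕ))


/-!
Fix `π = (w, z)` in the fiber and let `y` be `z` with its last color replaced by `0`. With
`d_i ∈ {0, 1}` the descent indicator of `w` at `i`, the integer `y_i - y_{i+1} - d_i` lies in
`[-r, r)` and is negative exactly when `i` is an `F`-descent of the word `windowD π`. So if
`c_i ∈ [0, r)` is its residue mod `r`, then `r · [F-descent at i] = d_i + c_i - (y_i - y_{i+1})`,
and Abel summation (using `y_n = 0`) gives `Dmaj π = maj w + ∑ i c_i`.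

The code `c ∈ [0, r)^{n-1}` determines `π`: `y_k ≡ ∑_{j ≥ k} (c_j + d_j)`, and the last color of
`π` is fixed by `col π ≡ 0 (mod r)`. Every code arises, so the sum over the fiber is
`q^{maj w} ∑_c ∏_i q^{i c_i} = q^{maj w} ∏_i [r]_{q^i}`, and `ε^{inv}` is constant on the fiber.
-/

theorem List.sum_eq_sum_range_getD {M : Type*} [AddCommMonoid M] (l : List M) :
    l.sum = ∑ i ∈ Finset.range l.length, l.getD i 0 := by
  induction l with
  | nil => simp
  | cons a l ih => simp [Finset.sum_range_succ', ih, add_comm]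

theorem Int.emod_eq_add_ite_neg {x r : ℤ} (hlo : -r ≤ x) (hhi : x < r) :
    x % r = x + r * if x < 0 then 1 else 0 := by
  split_ifs with hx
  · rw [← Int.add_mul_emod_self_left x r 1, Int.emod_eq_of_lt (by omega) (by omega)]
  · rw [Int.emod_eq_of_lt (by omega) hhi]; ring

theorem sum_range_succ_mul_sub {R : Type*} [CommRing R] (f : ℕ → R) (m : ℕ) :
    ∑ i ∈ range m, (i + 1 : R) * (f i - f (i + 1)) = ∑ i ∈ range m, f i - m * f m := by
  induction m with
  | zero => simp
  | succ m ih => rw [sum_range_succ, sum_range_succ, ih]; push_cast; ring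

def descentAt (l : List ℕ) (i : ℕ) : ℕ := if l.getD (i + 1) 0 < l.getD i 0 then 1 else 0

theorem majL_eq_sum_descentAt (l : List ℕ) :
    majL l = ∑ i ∈ range (l.length - 1), (i + 1) * descentAt l i := by
  unfold majL descentAt
  refine sum_congr rfl fun i _ => ?_
  split_ifs <;> simp

theorem colSum_eq_sum_range (l : List (ℕ × ℕ)) :
    colSum l = ∑ i ∈ range l.length, (l.getD i (0, 0)).2 := by
  rw [colSum, List.sum_eq_sum_range_getD, List.length_map]
  exact sum_congr rfl fun i _ => List.getD_map l (0, 0) Prod.snd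

def colorCode (r : ℕ) (l : List (ℕ × ℕ)) (i : ℕ) : ZMod r :=
  ((l.getD i (0, 0)).2 : ZMod r) - (l.getD (i + 1) (0, 0)).2 - descentAt (absList l) i

theorem flt_iff_sub_neg (p p' : ℕ × ℕ) :
    Flt p' p ↔ (p.2 - p'.2 - if p'.1 < p.1 then 1 else 0 : ℤ) < 0 := by
  unfold Flt
  split_ifs <;> omega

theorem mul_ite_flt_eq (r : ℕ) [NeZero r] (p p' : ℕ × ℕ) (hp : p.2 < r) (hp' : p'.2 < r) :
    (r * if Flt p' p then 1 else 0 : ℤ) =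
      (if p'.1 < p.1 then 1 else 0) +
        ((p.2 : ZMod r) - p'.2 - ((if p'.1 < p.1 then 1 else 0 : ℕ) : ZMod r)).val -
          (p.2 - p'.2) := by
  have hcast : ((p.2 : ZMod r) - p'.2 - ((if p'.1 < p.1 then 1 else 0 : ℕ) : ZMod r)) =
      (((p.2 - p'.2 - if p'.1 < p.1 then 1 else 0 : ℤ)) : ZMod r) := by
    split_ifs <;> push_cast <;> ring
  rw [hcast, ZMod.val_intCast, Int.emod_eq_add_ite_neg (by split_ifs <;> omega)
    (by split_ifs <;> omega), if_congr (flt_iff_sub_neg p p') rfl rfl]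
  ring

theorem descentAt_absList (l : List (ℕ × ℕ)) (i : ℕ) :
    descentAt (absList l) i =
      if (l.getD (i + 1) (0, 0)).1 < (l.getD i (0, 0)).1 then 1 else 0 := by
  rw [descentAt, absList, List.getD_map l (0, 0) Prod.fst, List.getD_map l (0, 0) Prod.fst]

theorem fmaj_eq_majL_add (r : ℕ) [NeZero r] (l : List (ℕ × ℕ)) (hcol : ∀ x ∈ l, x.2 < r)
    (hlast : (l.getD (l.length - 1) (0, 0)).2 = 0) :
    fmaj r l =
      majL (absList l) + ∑ i ∈ range (l.length - 1), (i + 1) * (colorCode r l i).val := by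
  have hy : ∀ i, (l.getD i (0, 0)).2 < r := fun i => by
    rcases lt_or_ge i l.length with hi | hi
    · exact hcol _ (List.getD_eq_getElem _ _ hi ▸ List.getElem_mem hi)
    · simp only [List.getD_eq_default _ _ hi, Nat.pos_of_neZero]
  have hpos : ∀ i,
      (r * ((if Flt (l.getD (i + 1) (0, 0)) (l.getD i (0, 0)) then i + 1 else 0 : ℕ) : ℤ)) =
      (i + 1) * (descentAt (absList l) i + (colorCode r l i).val) -
        (i + 1) * ((l.getD i (0, 0)).2 - (l.getD (i + 1) (0, 0)).2 : ℤ) := by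
    intro i
    have hF := mul_ite_flt_eq r _ _ (hy i) (hy (i + 1))
    rw [colorCode, descentAt_absList]
    split_ifs at hF ⊢ <;> push_cast at hF ⊢ <;> linear_combination (i + 1 : ℤ) * hF
  have hcolSum : (colSum l : ℤ) = ∑ i ∈ range (l.length - 1), ((l.getD i (0, 0)).2 : ℤ) := by
    rw [colSum_eq_sum_range]
    rcases Nat.eq_zero_or_pos l.length with h0 | hlen
    · simp [h0]
    · rw [← Nat.sub_add_cancel hlen, sum_range_succ, hlast]
      simp
  zify
  rw [fmaj, majF, majL_eq_sum_descentAt, show (absList l).length = l.length from List.length_map _]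
  simp only [Nat.cast_add, Nat.cast_mul, Nat.cast_sum]
  rw [mul_sum, sum_congr rfl (fun i _ => hpos i), sum_sub_distrib,
    sum_range_succ_mul_sub (fun i => ((l.getD i (0, 0)).2 : ℤ)), hcolSum, hlast]
  simp only [mul_add, sum_add_distrib]
  push_cast
  ring

section Fiber

variable {r n : ℕ}

theorem window_getD (π : GP r n) (k : Fin n) :
    (window π).getD k (0, 0) = ((π.1 k : ℕ) + 1, (π.2 k : ℕ)) := by
  simp [window]

theorem windowD_getD_snd (π : GP r n) (k : ℕ) :
    ((windowD π).getD k (0, 0)).2 = if h : k < n - 1 then (π.2 ⟨k, by omega⟩ : ℕ) else 0 := by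
  rcases lt_or_ge k n with hk | hk
  · rw [windowD, List.getD_eq_getElem _ _ (by simpa using hk)]
    by_cases h : k < n - 1 <;> simp [h] <;> omega
  · rw [List.getD_eq_default _ _ (by simpa [windowD] using hk), dif_neg (by omega)]

theorem absList_window (π : GP r n) : absList (window π) = permList π.1 := by
  simp [absList, window, permList]

theorem absList_windowD (π : GP r n) : absList (windowD π) = permList π.1 := by
  simp [absList, windowD, permList]

def dmajCode [NeZero r] (π : GP r n) : Fin (n - 1) → Fin r :=
  fun i => ⟨(colorCode r (windowD π) i).val, ZMod.val_lt _⟩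

theorem fmaj_windowD [NeZero r] (π : GP r n) :
    fmaj r (windowD π) =
      majL (permList π.1) + ∑ i : Fin (n - 1), (i + 1) * (dmajCode π i : ℕ) := by
  have hlen : (windowD π).length = n := by simp [windowD]
  have hcol : ∀ x ∈ windowD π, x.2 < r := by
    simp only [windowD, List.mem_map, List.mem_finRange, true_and, forall_exists_index]
    rintro x i rfl
    split_ifs
    exacts [Nat.pos_of_neZero r, (π.2 i).isLt]
  have hlast : ((windowD π).getD ((windowD π).length - 1) (0, 0)).2 = 0 := by
    rw [windowD_getD_snd, hlen, dif_neg (lt_irrefl _)]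
  rw [fmaj_eq_majL_add r _ hcol hlast, absList_windowD, hlen, ← Fin.sum_univ_eq_sum_range]
  rfl

def colorOfCode (w : Equiv.Perm (Fin n)) (c : Fin (n - 1) → Fin r) (k : ℕ) : ZMod r :=
  ∑ j ∈ Ico k (n - 1), ((if h : j < n - 1 then (c ⟨j, h⟩ : ℕ) else 0) + descentAt (permList w) j)

def ofCode [NeZero r] (w : Equiv.Perm (Fin n)) (c : Fin (n - 1) → Fin r) : GP r n :=
  (w, fun k => ⟨(if (k : ℕ) < n - 1 then colorOfCode w c k
    else -∑ j ∈ range (n - 1), colorOfCode w c j).val, ZMod.val_lt _⟩)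

theorem colorOfCode_eq_add (w : Equiv.Perm (Fin n)) (c : Fin (n - 1) → Fin r) {k : ℕ}
    (hk : k < n - 1) :
    colorOfCode w c k = (c ⟨k, hk⟩ : ℕ) + descentAt (permList w) k + colorOfCode w c (k + 1) := by
  rw [colorOfCode, sum_eq_sum_Ico_succ_bot hk, dif_pos hk, colorOfCode]

theorem colorOfCode_dmajCode [NeZero r] (π : GP r n) {k : ℕ} (hk : k ≤ n - 1) :
    colorOfCode π.1 (dmajCode π) k = (((windowD π).getD k (0, 0)).2 : ZMod r) := by
  set Y : ℕ → ZMod r := fun j => (((windowD π).getD j (0, 0)).2 : ZMod r)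
  have hstep : ∀ j ∈ Ico k (n - 1),
      (((if h : j < n - 1 then (dmajCode π ⟨j, h⟩ : ℕ) else 0) + descentAt (permList π.1) j : ℕ) :
        ZMod r) = -(Y (j + 1)) - -(Y j) := by
    intro j hj
    rw [dif_pos (mem_Ico.1 hj).2]
    simp only [dmajCode, Nat.cast_add, ZMod.natCast_zmod_val, colorCode, absList_windowD, Y]
    ring
  have hY : Y (n - 1) = 0 := by
    simp only [Y]
    rw [windowD_getD_snd, dif_neg (lt_irrefl _), Nat.cast_zero]
  rw [colorOfCode]
  push_cast at hstep ⊢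
  rw [sum_congr rfl hstep, sum_Ico_sub (fun j => -Y j) hk, hY]
  simp [Y]

theorem windowD_ofCode_getD_snd [NeZero r] (w : Equiv.Perm (Fin n)) (c : Fin (n - 1) → Fin r)
    {k : ℕ} (hk : k ≤ n - 1) :
    (((windowD (ofCode w c)).getD k (0, 0)).2 : ZMod r) = colorOfCode w c k := by
  rw [windowD_getD_snd]
  split_ifs with h
  · simp [ofCode, h]
  · simp [colorOfCode, show k = n - 1 by omega]

theorem dmajCode_ofCode [NeZero r] (w : Equiv.Perm (Fin n)) (c : Fin (n - 1) → Fin r) :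
    dmajCode (ofCode w c) = c := by
  funext i
  apply Fin.ext
  have hi := i.isLt
  rw [dmajCode, Fin.val_mk, colorCode, absList_windowD, windowD_ofCode_getD_snd w c (by omega),
    windowD_ofCode_getD_snd w c (by omega), colorOfCode_eq_add w c hi]
  simp only [ofCode, add_sub_cancel_right]
  exact ZMod.val_cast_of_lt (c i).isLt

theorem natCast_colSum_window (π : GP r n) (k : Fin n) (hk : (k : ℕ) = n - 1) :
    (colSum (window π) : ZMod r) =
      ∑ j ∈ range (n - 1), (((windowD π).getD j (0, 0)).2 : ZMod r) + (π.2 k : ℕ) := by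
  have hlen : (window π).length = n := by simp [window]
  rw [colSum_eq_sum_range, hlen, show range n = range (n - 1 + 1) by congr 1; omega,
    sum_range_succ, Nat.cast_add, Nat.cast_sum,
    (hk ▸ window_getD π k : (window π).getD (n - 1) (0, 0) = _)]
  congr 1
  refine sum_congr rfl fun j hj => ?_
  have hj : j < n - 1 := mem_range.1 hj
  rw [windowD_getD_snd, dif_pos hj, (window_getD π ⟨j, by omega⟩ : (window π).getD j (0, 0) = _)]

theorem ofCode_mem [NeZero r] (w : Equiv.Perm (Fin n)) (c : Fin (n - 1) → Fin r) :
    (ofCode w c).1 = w ∧ colSum (window (ofCode w c)) % r = 0 := by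
  refine ⟨rfl, ?_⟩
  rw [← Nat.dvd_iff_mod_eq_zero, ← ZMod.natCast_eq_zero_iff]
  rcases Nat.eq_zero_or_pos n with rfl | hn
  · simp [window, colSum]
  · rw [natCast_colSum_window _ ⟨n - 1, by omega⟩ rfl]
    rw [sum_congr rfl fun j hj => windowD_ofCode_getD_snd w c (mem_range.1 hj).le]
    simp [ofCode]

theorem ofCode_dmajCode [NeZero r] (π : GP r n) (hπ : colSum (window π) % r = 0) :
    ofCode π.1 (dmajCode π) = π := by
  refine Prod.ext rfl (funext fun k => Fin.ext ?_)
  simp only [ofCode]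
  split_ifs with hk
  · rw [colorOfCode_dmajCode π hk.le, windowD_getD_snd, dif_pos hk,
      ZMod.val_cast_of_lt (π.2 _).isLt]
  · have hk : (k : ℕ) = n - 1 := by omega
    rw [← Nat.dvd_iff_mod_eq_zero, ← ZMod.natCast_eq_zero_iff, natCast_colSum_window π k hk,
      add_eq_zero_iff_neg_eq] at hπ
    rw [sum_congr rfl fun j hj => colorOfCode_dmajCode π (mem_range.1 hj).le, hπ,
      ZMod.val_cast_of_lt (π.2 k).isLt]

theorem sum_fiber_eq_sum_code [NeZero r] {M : Type*} [AddCommMonoid M] (w : Equiv.Perm (Fin n))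
    (f : (Fin (n - 1) → Fin r) → M) :
    ∑ π ∈ univ.filter (fun π : GP r n => π.1 = w ∧ colSum (window π) % r = 0), f (dmajCode π) =
      ∑ c, f c := by
  refine sum_nbij' dmajCode (ofCode w) (fun _ _ => mem_univ _) (fun c _ => ?_) (fun π hπ => ?_)
    (fun c _ => dmajCode_ofCode w c) (fun _ _ => rfl)
  · simpa using ofCode_mem w c
  · obtain ⟨rfl, hcol⟩ := (mem_filter.1 hπ).2
    exact ofCode_dmajCode π hcol

end Fiber

theorem sum_prod_pow_eq_prod_qnum {m : ℕ} (r : ℕ) (x : Fin m → ℂ) :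
    ∑ c : Fin m → Fin r, ∏ i, x i ^ (c i : ℕ) = ∏ i, qnum r (x i) := by
  simp only [qnum, ← Fin.sum_univ_eq_sum_range, Fintype.prod_sum]

theorem prod_fin_succ_eq_prod_Icc {M : Type*} [CommMonoid M] (f : ℕ → M) (m : ℕ) :
    ∏ i : Fin m, f (i + 1) = ∏ j ∈ Icc 1 m, f j := by
  rw [Fin.prod_univ_eq_prod_range (fun i => f (i + 1)), range_eq_Ico, prod_Ico_add' f 0 m 1,
    zero_add, Finset.Ico_add_one_right_eq_Icc]

theorem Dmaj_fiber_general (r n : ℕ) (ε q : ℂ)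
    (hr : 1 ≤ r)
    (w : Equiv.Perm (Fin n)) :
    ∑ π ∈ Finset.univ.filter
        (fun π : GP r n => π.1 = w ∧ colSum (window π) % r = 0),
      ε ^ invNum (absList (window π)) * q ^ fmaj r (windowD π)
    = ε ^ invNum (permList w) * q ^ majL (permList w) *
        ∏ j ∈ Finset.Icc 1 (n - 1), qnum r (q ^ j) := by
  have : NeZero r := ⟨by omega⟩
  calc _ = ∑ π ∈ univ.filter (fun π : GP r n => π.1 = w ∧ colSum (window π) % r = 0),
        ε ^ invNum (permList w) * q ^ majL (permList w) *
          ∏ i : Fin (n - 1), (q ^ ((i : ℕ) + 1)) ^ (dmajCode π i : ℕ) := by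
        refine sum_congr rfl fun π hπ => ?_
        obtain ⟨rfl, -⟩ := (mem_filter.1 hπ).2
        simp only [absList_window, fmaj_windowD, pow_add, ← prod_pow_eq_pow_sum, pow_mul, mul_assoc]
    _ = ∑ c : Fin (n - 1) → Fin r, ε ^ invNum (permList w) * q ^ majL (permList w) *
          ∏ i : Fin (n - 1), (q ^ ((i : ℕ) + 1)) ^ (c i : ℕ) := by
        rw [← sum_fiber_eq_sum_code w]
    _ = _ := by
      rw [← mul_sum, sum_prod_pow_eq_prod_qnum, prod_fin_succ_eq_prod_Icc (fun j => qnum r (q ^ j))]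

/-- the `Dmaj` generating function over the fiber
`{π ∈ G*_{r,n} : |π| = w}`. -/
theorem Dmaj_fiber (r n : ℕ) (ε q : ℂ)
    (hr : 1 ≤ r) (hn : 1 ≤ n) (hε : ε = 1 ∨ ε = -1)
    (w : Equiv.Perm (Fin n)) :
    ∑ π ∈ Finset.univ.filter
        (fun π : GP r n => π.1 = w ∧ colSum (window π) % r = 0),
      ε ^ invNum (absList (window π)) * q ^ fmaj r (windowD π)
    = ε ^ invNum (permList w) * q ^ majL (permList w) *
        ∏ j ∈ Finset.Icc 1 (n - 1), qnum r (q ^ j) :=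
  Dmaj_fiber_general r n ε q hr w
end
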